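/- Let (W,S) be a Coxeter system, and suppose x ≤ w in the Bruhat order, s ∈ S is a simple reflection with w < ws, and xs ≰ w (the hypotheses of the Setup Move; then xs ≤ ws). Then the set of reflections r of W with r(xs) ≤ ws equals the union of the set of reflections r with rx ≤ w and the single reflection xsx⁻¹, and this union is disjoint (xsx⁻¹ does not belong to the first set). -/

import Mathlib

/-!
The Bruhat-order input is the lifting property for `w < ws`: `x ≤ w` implies `xs ≤ ws`, and
`u ≤ ws` implies `u ≤ w` or `us ≤ w`. The first is proved by induction along a Bruhat chain,
one reflection step at a time; the second then follows from the subword property. Both rest on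
the strong exchange condition, which comes from the sign representation of `W` on `W × {±1}`
(Björner–Brenti, Thm. 1.4.3).

Given lifting, a reflection `r` with `r(xs) ≤ ws` has `rxs ≤ w` or `rx ≤ w`. Suppose `rxs ≤ w`
but `rx ≰ w`. Then `x < rx` (else `rx < x ≤ w`), while `x < xs` and `rxs < xs` (else `xs ≤ w`),
so `ℓ(rxs) = ℓ(x)`; lifting `rxs ≤ xs` over `x < xs` gives `rxs ≤ x`, hence `rxs = x`, i.e.
`r = xsx⁻¹`. Conversely `rx ≤ w` lifts to `rxs ≤ ws`, and `xsx⁻¹` is excluded from the first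
set because `(xsx⁻¹)x = xs ≰ w`.
-/

noncomputable section

variable {B : Type*} {W : Type*} [Group W]

/-- The Bruhat order on a Coxeter group: the partial order generated by `u < r * u`
whenever `r` is a reflection and `ℓ(u) < ℓ(r * u)`. -/
def CoxBruhatLE {M : CoxeterMatrix B} (cs : CoxeterSystem M W) (x w : W) : Prop :=
  Relation.ReflTransGen
    (fun a b => ∃ r : W, cs.IsReflection r ∧ b = r * a ∧ cs.length a < cs.length b) x w

/-- The strict Bruhat order. -/
def CoxBruhatLT {M : CoxeterMatrix B} (cs : CoxeterSystem M W) (x w : W) : Prop :=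
  CoxBruhatLE cs x w ∧ x ≠ w

/-- `R(w)`: the subgroup generated by the simple reflections `s` with `w * s < w`. -/
def Rsub {M : CoxeterMatrix B} (cs : CoxeterSystem M W) (w : W) : Subgroup W :=
  Subgroup.closure {s | (∃ i : B, s = cs.simple i) ∧ CoxBruhatLT cs (w * s) w}

/-- `q^w_x = n^w_x − ℓ(w)` where `n^w_x` is the number of reflections `r` with `r x ≤ w`. -/
def coxQ {M : CoxeterMatrix B} (cs : CoxeterSystem M W) (w x : W) : ℤ :=
  (Set.ncard {r : W | cs.IsReflection r ∧ CoxBruhatLE cs (r * x) w} : ℤ)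
    - (cs.length w : ℤ)

namespace List

theorem sublist_append_singleton_iff {α : Type*} {l l' : List α} {a : α} :
    l <+ l' ++ [a] ↔ l <+ l' ∨ ∃ r, r <+ l' ∧ l = r ++ [a] := by
  rw [sublist_append_iff]
  constructor
  · rintro ⟨l₁, l₂, rfl, h₁, h₂⟩
    rcases sublist_singleton.mp h₂ with rfl | rfl
    · simpa using Or.inl h₁
    · exact Or.inr ⟨l₁, h₁, rfl⟩
  · rintro (h | ⟨r, h, rfl⟩)
    · exact ⟨l, [], by simp, h, by simp⟩
    · exact ⟨r, [a], rfl, h, .refl _⟩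

end List

namespace CoxeterSystem

variable {M : CoxeterMatrix B} (cs : CoxeterSystem M W)

local prefix:100 "s " => cs.simple
local prefix:100 "π " => cs.wordProd
local prefix:100 "ℓ " => cs.length
local prefix:100 "ris " => cs.rightInvSeq

theorem simple_mul_mul_simple_eq_iff (i : B) {a b : W} :
    s i * a * s i = b ↔ a = s i * b * s i := by
  constructor <;> rintro rfl <;> simp [mul_assoc, simple_mul_simple_cancel_left]

theorem isReduced_append_singleton_iff {ω : List B} {i : B} :
    cs.IsReduced (ω ++ [i]) ↔ cs.IsReduced ω ∧ ℓ (π ω) < ℓ (π ω * s i) := by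
  have := cs.length_wordProd_le ω
  have := cs.length_mul_simple (π ω) i
  simp only [IsReduced, wordProd_append, wordProd_singleton, List.length_append,
    List.length_singleton]
  omega

section ReflectionRepresentation

variable [DecidableEq W]

-- Björner–Brenti's action of `s i` on `T × {±1}`, extended to all of `W × ℤˣ` so that no
-- subtype of reflections is needed.
def simpleReflFun (i : B) (p : W × ℤˣ) : W × ℤˣ :=
  (s i * p.1 * s i, (if p.1 = s i then -1 else 1) * p.2)

theorem simpleReflFun_involutive (i : B) : Function.Involutive (cs.simpleReflFun i) := by
  rintro ⟨t, ε⟩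
  have hconj : s i * t * s i = s i ↔ t = s i := by
    rw [simple_mul_mul_simple_eq_iff, simple_mul_simple_cancel_right]
  simp only [simpleReflFun, hconj]
  by_cases ht : t = s i <;> simp [ht, mul_assoc, simple_mul_simple_cancel_left]

def simpleReflPerm (i : B) : Equiv.Perm (W × ℤˣ) := (cs.simpleReflFun_involutive i).toPerm

theorem simpleReflPerm_apply (i : B) (t : W) (ε : ℤˣ) :
    cs.simpleReflPerm i (t, ε) = (s i * t * s i, (if t = s i then -1 else 1) * ε) := rfl

theorem simpleReflPerm_mul_pow_apply (i j : B) (k : ℕ) (t : W) (ε : ℤˣ) :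
    ((cs.simpleReflPerm i * cs.simpleReflPerm j) ^ k) (t, ε) =
      ((s i * s j) ^ k * t * ((s i * s j) ^ k)⁻¹,
        (∏ l ∈ Finset.range (2 * k), if t = (s j * s i) ^ l * s j then -1 else 1) * ε) := by
  induction k generalizing t ε with
  | zero => simp
  | succ k ih =>
    have hshift : ∀ l, s i * (s j * t * s j) * s i = (s j * s i) ^ l * s j ↔
        t = (s j * s i) ^ (l + 2) * s j := fun l => by
      rw [simple_mul_mul_simple_eq_iff, simple_mul_mul_simple_eq_iff, pow_succ', pow_succ]
      simp only [mul_assoc]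
    have h1 : s j * t * s j = s i ↔ t = (s j * s i) ^ 1 * s j := by
      rw [simple_mul_mul_simple_eq_iff, pow_one]
    have h0 : t = s j ↔ t = (s j * s i) ^ 0 * s j := by rw [pow_zero, one_mul]
    rw [pow_succ, Equiv.Perm.mul_apply, Equiv.Perm.mul_apply, simpleReflPerm_apply,
      simpleReflPerm_apply, ih]
    refine Prod.ext ?_ ?_
    · simp [pow_succ, mul_assoc]
    · simp only [hshift, h1, h0, Nat.mul_succ, Finset.prod_range_succ' _ (2 * k + 1),
        Finset.prod_range_succ' _ (2 * k)]
      simp only [mul_assoc]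

theorem isLiftable_simpleReflPerm : M.IsLiftable cs.simpleReflPerm := by
  intro i j
  ext ⟨t, ε⟩ : 1
  -- `(s j * s i) ^ M i j = 1`, so the sign over `2 * M i j` steps is a square.
  have hperiod : ∀ l, (s j * s i) ^ (M i j + l) * s j = (s j * s i) ^ l * s j := by
    simp [pow_add]
  rw [simpleReflPerm_mul_pow_apply, simple_mul_simple_pow, two_mul, Finset.prod_range_add]
  simp only [hperiod, Int.units_mul_self, one_mul, mul_one, inv_one, Equiv.Perm.one_apply]

def reflRep : W →* Equiv.Perm (W × ℤˣ) :=
  cs.lift ⟨cs.simpleReflPerm, cs.isLiftable_simpleReflPerm⟩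

theorem reflRep_simple (i : B) : cs.reflRep (s i) = cs.simpleReflPerm i :=
  cs.lift_apply_simple cs.isLiftable_simpleReflPerm i

theorem reflRep_wordProd_apply (ω : List B) (t : W) (ε : ℤˣ) :
    cs.reflRep (π ω) (t, ε) = (π ω * t * (π ω)⁻¹, (-1) ^ (ris ω).count t * ε) := by
  induction ω with
  | nil => simp
  | cons i ω ih =>
    have hflip : π ω * t * (π ω)⁻¹ = s i ↔ (π ω)⁻¹ * s i * π ω = t :=
      ⟨fun h => by rw [← h]; group, by rintro rfl; group⟩
    rw [wordProd_cons, map_mul, Equiv.Perm.mul_apply, ih, reflRep_simple, simpleReflPerm_apply]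
    simp only [hflip]
    refine Prod.ext (by simp [mul_assoc]) ?_
    by_cases h : (π ω)⁻¹ * s i * π ω = t <;> simp [rightInvSeq, h, pow_succ]

theorem reflRep_apply_fst (w t : W) (ε : ℤˣ) : (cs.reflRep w (t, ε)).1 = w * t * w⁻¹ := by
  obtain ⟨ω, rfl⟩ := cs.wordProd_surjective w
  simp [reflRep_wordProd_apply]

theorem reflRep_apply_neg (w t : W) (ε : ℤˣ) :
    cs.reflRep w (t, -ε) = ((cs.reflRep w (t, ε)).1, -(cs.reflRep w (t, ε)).2) := by
  obtain ⟨ω, rfl⟩ := cs.wordProd_surjective w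
  simp [reflRep_wordProd_apply]

variable {cs} in
theorem IsReflection.reflRep_apply_self {t : W} (ht : cs.IsReflection t) (ε : ℤˣ) :
    cs.reflRep t (t, ε) = (t, -ε) := by
  obtain ⟨v, i, rfl⟩ := ht
  obtain ⟨δ, hδ⟩ : ∃ δ, cs.reflRep v⁻¹ (v * s i * v⁻¹, ε) = (s i, δ) :=
    ⟨_, Prod.ext (by rw [reflRep_apply_fst]; group) rfl⟩
  have hback : cs.reflRep v (s i, δ) = (v * s i * v⁻¹, ε) := by
    rw [← hδ, ← Equiv.Perm.mul_apply, ← map_mul, mul_inv_cancel, map_one, Equiv.Perm.one_apply]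
  rw [map_mul, map_mul, Equiv.Perm.mul_apply, Equiv.Perm.mul_apply, hδ, reflRep_simple,
    simpleReflPerm_apply, if_pos rfl, simple_mul_simple_cancel_right, neg_one_mul,
    reflRep_apply_neg, hback]

end ReflectionRepresentation

theorem mem_rightInvSeq_of_length_mul_lt {ω : List B} {t : W} (ht : cs.IsReflection t)
    (h : ℓ (π ω * t) < ℓ (π ω)) : t ∈ ris ω := by
  classical
  -- Otherwise `t` has sign `1` under `π ω`, hence sign `-1` under `π ω * t`, which makes `t` a
  -- right inversion of `π ω * t`.
  by_contra hω
  obtain ⟨ω', hω', hωω'⟩ := cs.exists_isReduced (π ω * t)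
  have hsign : (-1 : ℤˣ) ^ (ris ω').count t = -1 := by
    have h' := congrArg Prod.snd (cs.reflRep_wordProd_apply ω' t 1)
    rw [← hωω', map_mul, Equiv.Perm.mul_apply, ht.reflRep_apply_self, reflRep_wordProd_apply,
      List.count_eq_zero_of_not_mem hω] at h'
    simpa using h'.symm
  have hω't : t ∈ ris ω' := by
    by_contra hω't
    rw [List.count_eq_zero_of_not_mem hω't] at hsign
    exact absurd hsign (by decide)
  have h'' := (cs.isRightInversion_of_mem_rightInvSeq hω' hω't).2
  rw [← hωω', mul_assoc, ht.mul_self, mul_one] at h''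
  omega

theorem exists_eraseIdx_wordProd_eq_reflection_mul (ω : List B) {r : W}
    (hr : cs.IsReflection r) (h : ℓ (r * π ω) < ℓ (π ω)) :
    ∃ j < ω.length, π (ω.eraseIdx j) = r * π ω := by
  have ht : cs.IsReflection ((π ω)⁻¹ * r * π ω) := by simpa using hr.conj (π ω)⁻¹
  have hmul : π ω * ((π ω)⁻¹ * r * π ω) = r * π ω := by group
  obtain ⟨j, hj, hget⟩ :=
    List.mem_iff_getElem.mp (cs.mem_rightInvSeq_of_length_mul_lt ht (hmul ▸ h))
  refine ⟨j, by simpa using hj, ?_⟩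
  rw [← wordProd_mul_getD_rightInvSeq, List.getD_eq_getElem _ _ hj, hget, hmul]

end CoxeterSystem

section BruhatOrder

open CoxeterSystem List

variable {M : CoxeterMatrix B} {cs : CoxeterSystem M W} {a b c u x w r t : W}

local prefix:100 "s " => cs.simple
local prefix:100 "π " => cs.wordProd
local prefix:100 "ℓ " => cs.length

theorem CoxBruhatLE.trans (hab : CoxBruhatLE cs a b) (hbc : CoxBruhatLE cs b c) :
    CoxBruhatLE cs a c :=
  Relation.ReflTransGen.trans hab hbc

theorem CoxBruhatLE.length_le (h : CoxBruhatLE cs a b) : ℓ a ≤ ℓ b := by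
  induction h with
  | refl => exact le_rfl
  | tail _ hstep ih =>
    obtain ⟨r, _, rfl, hlen⟩ := hstep
    omega

theorem CoxBruhatLE.eq_of_length_le (h : CoxBruhatLE cs a b) (hl : ℓ b ≤ ℓ a) : a = b := by
  rcases Relation.ReflTransGen.cases_tail h with rfl | ⟨c, hac, r, -, rfl, hlen⟩
  · rfl
  · have := CoxBruhatLE.length_le hac
    omega

theorem coxBruhatLE_reflection_mul (hr : cs.IsReflection r) (h : ℓ a < ℓ (r * a)) :
    CoxBruhatLE cs a (r * a) :=
  .single ⟨r, hr, rfl, h⟩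

theorem reflection_mul_coxBruhatLE (hr : cs.IsReflection r) (h : ℓ (r * a) < ℓ a) :
    CoxBruhatLE cs (r * a) a := by
  have hrra : r * (r * a) = a := by rw [← mul_assoc, hr.mul_self, one_mul]
  simpa [hrra] using coxBruhatLE_reflection_mul hr (a := r * a) (by rwa [hrra])

theorem coxBruhatLE_mul_reflection (ht : cs.IsReflection t) (h : ℓ a < ℓ (a * t)) :
    CoxBruhatLE cs a (a * t) := by
  simpa using coxBruhatLE_reflection_mul (ht.conj a) (a := a) (by simpa using h)

theorem mul_reflection_coxBruhatLE (ht : cs.IsReflection t) (h : ℓ (a * t) < ℓ a) :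
    CoxBruhatLE cs (a * t) a := by
  have hatt : a * t * t = a := by rw [mul_assoc, ht.mul_self, mul_one]
  simpa [hatt] using coxBruhatLE_mul_reflection ht (a := a * t) (by rwa [hatt])

theorem CoxeterSystem.IsReflection.mul_simple_eq_mul_of_length_lt {i : B}
    (hr : cs.IsReflection r) (hc : ℓ c < ℓ (r * c)) (hrcs : ℓ (r * c * s i) < ℓ (c * s i)) :
    c * s i = r * c := by
  -- The lengths force `ℓ (r * c * s i) = ℓ c`. Strong exchange in a reduced word for `r * c`
  -- ending in `i` then has to delete that last letter: deleting any other one would leave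
  -- `c * s i` too short.
  obtain ⟨ω, hω, hωrc⟩ := cs.exists_isReduced (r * c * s i)
  have := cs.length_mul_simple c i
  have := cs.length_mul_simple (r * c) i
  have hrc : r * c = π (ω ++ [i]) := by
    rw [wordProd_append, wordProd_singleton, ← hωrc, simple_mul_simple_cancel_right]
  have hrrc : r * (r * c) = c := by rw [← mul_assoc, hr.mul_self, one_mul]
  obtain ⟨j, hj, hc_eq⟩ :=
    cs.exists_eraseIdx_wordProd_eq_reflection_mul (ω ++ [i]) hr (by rwa [← hrc, hrrc])
  rw [← hrc, hrrc] at hc_eq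
  obtain hjω | rfl : j < ω.length ∨ j = ω.length := by simp at hj; omega
  · rw [List.eraseIdx_append_of_lt_length hjω, wordProd_append, wordProd_singleton] at hc_eq
    have hlen : ℓ (c * s i) < ω.length := by
      rw [← hc_eq, simple_mul_simple_cancel_right]
      refine (cs.length_wordProd_le _).trans_lt ?_
      rw [List.length_eraseIdx_of_lt hjω]
      omega
    have := hω.eq
    rw [← hωrc] at this
    omega
  · rw [List.eraseIdx_eq_dropLast (by simp), List.dropLast_concat] at hc_eq
    calc c * s i = π ω * s i := by rw [hc_eq]
      _ = r * c := by rw [← hωrc, simple_mul_simple_cancel_right]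

theorem mul_simple_coxBruhatLE_or_of_length_lt (hr : cs.IsReflection r) (hc : ℓ c < ℓ (r * c))
    (i : B) : CoxBruhatLE cs (c * s i) (r * c) ∨ CoxBruhatLE cs (c * s i) (r * c * s i) := by
  rw [mul_assoc]
  rcases (hr.length_mul_right_ne (c * s i)).lt_or_gt with hrcs | hrcs
  · rw [← mul_assoc, hr.mul_simple_eq_mul_of_length_lt hc (by rwa [mul_assoc])]
    exact .inl .refl
  · exact .inr (coxBruhatLE_reflection_mul hr hrcs)

theorem CoxBruhatLE.mul_simple_le_or_le_mul_simple (h : CoxBruhatLE cs x w) (i : B) :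
    CoxBruhatLE cs (x * s i) w ∨ CoxBruhatLE cs (x * s i) (w * s i) := by
  induction h with
  | refl => exact .inr .refl
  | tail _ hstep ih =>
    obtain ⟨r, hr, rfl, hlen⟩ := hstep
    rcases ih with h | h
    · exact .inl (h.trans (coxBruhatLE_reflection_mul hr hlen))
    · exact (mul_simple_coxBruhatLE_or_of_length_lt hr hlen i).imp h.trans h.trans

theorem CoxBruhatLE.mul_simple_of_length_lt {i : B} (h : CoxBruhatLE cs x w)
    (hw : ℓ w < ℓ (w * s i)) : CoxBruhatLE cs (x * s i) (w * s i) :=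
  (h.mul_simple_le_or_le_mul_simple i).elim
    (fun h' => h'.trans (coxBruhatLE_mul_reflection (cs.isReflection_simple i) hw)) id

theorem CoxBruhatLE.exists_sublist_wordProd_eq {ω : List B} (h : CoxBruhatLE cs u (π ω)) :
    ∃ σ, σ <+ ω ∧ π σ = u := by
  induction h using Relation.ReflTransGen.head_induction_on with
  | refl => exact ⟨ω, .refl ω, rfl⟩
  | @head a b hstep _ ih =>
    obtain ⟨σ, hσ, rfl⟩ := ih
    obtain ⟨r, hr, hσa, hlen⟩ := hstep
    have ha : r * π σ = a := by rw [hσa, ← mul_assoc, hr.mul_self, one_mul]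
    obtain ⟨j, -, hj⟩ := cs.exists_eraseIdx_wordProd_eq_reflection_mul σ hr (by rwa [ha])
    exact ⟨σ.eraseIdx j, (σ.eraseIdx_sublist j).trans hσ, hj.trans ha⟩

theorem coxBruhatLE_wordProd_of_sublist {σ ω : List B} (hω : cs.IsReduced ω) (h : σ <+ ω) :
    CoxBruhatLE cs (π σ) (π ω) := by
  induction ω using List.reverseRecOn generalizing σ with
  | nil => rw [List.sublist_nil.mp h]; exact .refl
  | append_singleton ω i ih =>
    obtain ⟨hω, hωi⟩ := cs.isReduced_append_singleton_iff.mp hω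
    rw [wordProd_append, wordProd_singleton]
    rcases List.sublist_append_singleton_iff.mp h with hσ | ⟨τ, hτ, rfl⟩
    · exact (ih hω hσ).trans (coxBruhatLE_mul_reflection (cs.isReflection_simple i) hωi)
    · rw [wordProd_append, wordProd_singleton]
      exact (ih hω hτ).mul_simple_of_length_lt hωi

theorem CoxBruhatLE.le_or_mul_simple_le {i : B} (h : CoxBruhatLE cs u (w * s i))
    (hw : ℓ w < ℓ (w * s i)) : CoxBruhatLE cs u w ∨ CoxBruhatLE cs (u * s i) w := by
  obtain ⟨ω, hω, rfl⟩ := cs.exists_isReduced w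
  rw [← wordProd_singleton, ← wordProd_append] at h
  obtain ⟨σ, hσ, rfl⟩ := h.exists_sublist_wordProd_eq
  rcases List.sublist_append_singleton_iff.mp hσ with hσ | ⟨τ, hτ, rfl⟩
  · exact .inl (coxBruhatLE_wordProd_of_sublist hω hσ)
  · rw [wordProd_append, wordProd_singleton, simple_mul_simple_cancel_right]
    exact .inr (coxBruhatLE_wordProd_of_sublist hω hτ)

theorem CoxeterSystem.IsReflection.mul_eq_mul_simple_of_not_coxBruhatLE {i : B}
    (hr : cs.IsReflection r) (hxw : CoxBruhatLE cs x w) (hxs : ¬CoxBruhatLE cs (x * s i) w)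
    (hrxs : CoxBruhatLE cs (r * x * s i) w) (hrx : ¬CoxBruhatLE cs (r * x) w) :
    r * x = x * s i := by
  have hx : ℓ x < ℓ (x * s i) := (cs.length_mul_simple_ne x i).lt_or_gt.resolve_left
    fun h => hxs ((mul_reflection_coxBruhatLE (cs.isReflection_simple i) h).trans hxw)
  have hrx_len : ℓ x < ℓ (r * x) := (hr.length_mul_right_ne x).lt_or_gt.resolve_left
    fun h => hrx ((reflection_mul_coxBruhatLE hr h).trans hxw)
  have hrxs_len : ℓ (r * (x * s i)) < ℓ (x * s i) :=
    (hr.length_mul_right_ne _).lt_or_gt.resolve_right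
      fun h => hxs ((coxBruhatLE_reflection_mul hr h).trans (by rwa [← mul_assoc]))
  have hle := reflection_mul_coxBruhatLE hr hrxs_len
  rw [← mul_assoc] at hrxs_len hle
  have := cs.length_mul_simple x i
  have := cs.length_mul_simple (r * x) i
  rcases hle.le_or_mul_simple_le hx with h | h
  · have hrxs_eq := h.eq_of_length_le (by omega)
    calc r * x = r * x * s i * s i := (cs.simple_mul_simple_cancel_right i).symm
      _ = x * s i := by rw [hrxs_eq]
  · rw [simple_mul_simple_cancel_right] at h
    have := h.length_le
    omega

end BruhatOrder

/-- **Proposition (Setup Move).** Let `(W,S)` be a Coxeter system, `x ≤ w`, `s ∈ S` with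
`w < w s` and `x s ≰ w` (then `x s ≤ w s`). Then the set of reflections `r` with
`r (x s) ≤ w s` is the disjoint union of the set of reflections `r` with `r x ≤ w`
and the single reflection `x s x⁻¹`. -/
theorem setup_move_reflections
    {B : Type*} {W : Type*} [Group W] {M : CoxeterMatrix B} (cs : CoxeterSystem M W)
    (x w : W) (hxw : CoxBruhatLE cs x w) (i : B)
    (hws : CoxBruhatLT cs w (w * cs.simple i))
    (hxs : ¬ CoxBruhatLE cs (x * cs.simple i) w) :
    CoxBruhatLE cs (x * cs.simple i) (w * cs.simple i) ∧
    {r : W | cs.IsReflection r ∧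
        CoxBruhatLE cs (r * (x * cs.simple i)) (w * cs.simple i)}
      = {r : W | cs.IsReflection r ∧ CoxBruhatLE cs (r * x) w}
          ∪ {x * cs.simple i * x⁻¹} ∧
    x * cs.simple i * x⁻¹ ∉ {r : W | cs.IsReflection r ∧ CoxBruhatLE cs (r * x) w} := by
  have hw : cs.length w < cs.length (w * cs.simple i) :=
    hws.1.length_le.lt_of_ne (cs.length_mul_simple_ne w i).symm
  refine ⟨hxw.mul_simple_of_length_lt hw, Set.ext fun r => ⟨?_, ?_⟩, fun ⟨_, h⟩ => hxs ?_⟩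
  · rintro ⟨hr, h⟩
    rw [← mul_assoc] at h
    rcases h.le_or_mul_simple_le hw with hrxs | hrx
    · by_cases hrx : CoxBruhatLE cs (r * x) w
      · exact .inl ⟨hr, hrx⟩
      · exact .inr (eq_mul_inv_of_mul_eq
          (hr.mul_eq_mul_simple_of_not_coxBruhatLE hxw hxs hrxs hrx))
    · exact .inl ⟨hr, by rwa [cs.simple_mul_simple_cancel_right] at hrx⟩
  · rintro (⟨hr, h⟩ | rfl)
    · exact ⟨hr, by simpa [mul_assoc] using h.mul_simple_of_length_lt hw⟩
    · refine ⟨(cs.isReflection_simple i).conj x, ?_⟩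
      simpa [mul_assoc, cs.simple_mul_simple_self] using hxw.trans hws.1
  · simpa [mul_assoc] using h
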